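/- arXiv:1401.0987 — 4 statements merged into one kernel-verified Lean document; each statement's English description precedes it below -/
import Mathlib

section
/- Let d ≥ 1, J ≥ 1, σ > 0, let x_1, …, x_J ∈ ℝ^d be fixed vectors, let α = (α_1, …, α_J) ∈ ℝ^J satisfy ‖α‖_1 ≤ 1, and define f : ℝ^d → ℝ by f(x) = Σ_{j=1}^J α_j · exp(−‖x − x_j‖²/(2σ²)). Then for every natural number K with K ≤ σ², one has ‖f‖_K ≤ 1; that is, for every multi-index k = (k_1, …, k_d) with |k| = k_1 + … + k_d ≤ K and every x ∈ [−1,1]^d, |D^k f(x)| ≤ 1. -/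
/-!
Each kernel factorises, `exp (-‖x - c‖² / (2σ²)) = ∏ᵢ g (σ⁻¹ (xᵢ - cᵢ))` with
`g u = exp (-u² / 2)`, so `D^k f (x) = ∑ⱼ αⱼ ∏ᵢ σ^{-kᵢ} g^{(kᵢ)} (σ⁻¹ (xᵢ - xⱼᵢ))`. Since
`∑ⱼ |αⱼ| ≤ 1`, it suffices that `|g^{(n)}| ≤ √(n!) ≤ n^{n/2} ≤ σⁿ` for `n ≤ σ²`.

The bound on `g^{(n)}` comes from the recurrence `g^{(n+2)} = -u g^{(n+1)} - (n+1) g^{(n)}`: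
the energy `Eₙ = (g^{(n+1)})² + (n+1) (g^{(n)})²` has `Eₙ' = -2u (g^{(n+1)})²`, so it is maximal
at `0`, and at `0` the recurrence gives `E_{n+1}(0) ≤ (n+2) Eₙ(0)`, hence `Eₙ(0) ≤ (n+1)!`.
-/

open scoped BigOperators

/-- Partial derivative of `f` in the `i`-th coordinate direction. -/
noncomputable def pderiv' {d : ℕ} (i : Fin d) (f : (Fin d → ℝ) → ℝ) :
    (Fin d → ℝ) → ℝ :=
  fun x => fderiv ℝ f x (Pi.single i 1)

/-- Mixed partial derivative `D^k = D_1^{k_1} ⋯ D_d^{k_d}` for a multi-index `k`. -/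
noncomputable def mixedPartial {d : ℕ} (k : Fin d → ℕ) (f : (Fin d → ℝ) → ℝ) :
    (Fin d → ℝ) → ℝ :=
  (List.finRange d).foldr (fun i g => (pderiv' i)^[k i] g) f

open scoped ContDiff Nat

theorem ContDiff.hasDerivAt_iteratedDeriv {𝕜 F : Type*} [NontriviallyNormedField 𝕜]
    [NormedAddCommGroup F] [NormedSpace 𝕜 F] {f : 𝕜 → F} (hf : ContDiff 𝕜 ∞ f) (n : ℕ) (x : 𝕜) :
    HasDerivAt (iteratedDeriv n f) (iteratedDeriv (n + 1) f x) x := by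
  rw [iteratedDeriv_succ]
  exact ((hf.differentiable_iteratedDeriv n (by exact_mod_cast ENat.natCast_lt_top n)) x).hasDerivAt

lemma hasDerivAt_neg_mul {f : ℝ → ℝ} {f' u : ℝ} (hf : HasDerivAt f f' u) :
    HasDerivAt (fun v => -v * f v) (-f u - u * f') u :=
  ((hasDerivAt_id' u).fun_neg.fun_mul hf).congr_deriv (by ring)

lemma apply_le_apply_zero_of_mul_deriv_nonpos {f f' : ℝ → ℝ} (hf : ∀ t, HasDerivAt f (f' t) t)
    (hf' : ∀ t, t * f' t ≤ 0) (x : ℝ) : f x ≤ f 0 := by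
  have hcont : Continuous f := continuous_iff_continuousAt.2 fun t => (hf t).continuousAt
  rcases le_total 0 x with hx | hx
  · refine antitoneOn_of_hasDerivWithinAt_nonpos (convex_Ici 0) hcont.continuousOn
      (fun t _ => (hf t).hasDerivWithinAt) (fun t ht => ?_) Set.self_mem_Ici hx hx
    rw [interior_Ici, Set.mem_Ioi] at ht
    exact nonpos_of_mul_nonpos_right (hf' t) ht
  · refine monotoneOn_of_hasDerivWithinAt_nonneg (convex_Iic 0) hcont.continuousOn
      (fun t _ => (hf t).hasDerivWithinAt) (fun t ht => ?_) hx Set.self_mem_Iic hx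
    rw [interior_Iic, Set.mem_Iio] at ht
    exact nonneg_of_mul_nonpos_right (hf' t) ht

lemma pderiv'_eq_deriv_update {d : ℕ} {f : (Fin d → ℝ) → ℝ} {x : Fin d → ℝ}
    (hf : DifferentiableAt ℝ f x) (a : Fin d) :
    pderiv' a f x = deriv (fun t => f (Function.update x a t)) (x a) := by
  have hx : HasDerivAt (Function.update x a) (Pi.single a 1) (x a) := hasDerivAt_update x a (x a)
  rw [← Function.update_eq_self a x] at hf
  simpa [pderiv', Function.comp_def] using (hf.hasFDerivAt.comp_hasDerivAt (x a) hx).deriv.symm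

lemma prod_update_apply_update {κ β M : Type*} [Fintype κ] [DecidableEq κ] [CommMonoid M]
    (w : κ → β → M) (x : κ → β) (a : κ) (g : β → M) (t : β) :
    ∏ i, Function.update w a g i (Function.update x a t i) =
      g t * ∏ i ∈ Finset.univ \ {a}, w i (x i) := by
  rw [← Finset.prod_update_of_mem (Finset.mem_univ a)]
  refine Finset.prod_congr rfl fun i _ => ?_
  rcases eq_or_ne i a with rfl | hia
  · simp
  · simp [hia]

noncomputable def gaussian (u : ℝ) : ℝ := Real.exp (-(u ^ 2 / 2))

lemma contDiff_gaussian : ContDiff ℝ ∞ gaussian := by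
  unfold gaussian; fun_prop

lemma hasDerivAt_gaussian (u : ℝ) : HasDerivAt gaussian (-u * gaussian u) u := by
  have h : HasDerivAt (fun v : ℝ => -(v ^ 2 / 2)) (-u) u := by
    simpa using ((hasDerivAt_pow 2 u).div_const 2).fun_neg
  exact h.exp.congr_deriv (mul_comm _ _)

lemma iteratedDeriv_gaussian_add_two (n : ℕ) (u : ℝ) :
    iteratedDeriv (n + 2) gaussian u =
      -u * iteratedDeriv (n + 1) gaussian u - (n + 1) * iteratedDeriv n gaussian u := by
  induction n generalizing u with
  | zero =>
    have h1 : iteratedDeriv 1 gaussian = fun v => -v * gaussian v := by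
      ext v; rw [iteratedDeriv_one, (hasDerivAt_gaussian v).deriv]
    have h2 := hasDerivAt_neg_mul (hasDerivAt_gaussian u)
    rw [iteratedDeriv_succ, h1, h2.deriv, iteratedDeriv_zero]
    ring
  | succ n ih =>
    have h := (hasDerivAt_neg_mul (contDiff_gaussian.hasDerivAt_iteratedDeriv (n + 1) u)).fun_sub
      ((contDiff_gaussian.hasDerivAt_iteratedDeriv n u).const_mul ((n : ℝ) + 1))
    have h' := contDiff_gaussian.hasDerivAt_iteratedDeriv (n + 2) u
    rw [funext ih] at h'
    rw [h'.unique h]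
    push_cast; ring

noncomputable def gaussianEnergy (n : ℕ) (u : ℝ) : ℝ :=
  iteratedDeriv (n + 1) gaussian u ^ 2 + (n + 1) * iteratedDeriv n gaussian u ^ 2

lemma hasDerivAt_gaussianEnergy (n : ℕ) (u : ℝ) :
    HasDerivAt (gaussianEnergy n) (-2 * u * iteratedDeriv (n + 1) gaussian u ^ 2) u := by
  have h := ((contDiff_gaussian.hasDerivAt_iteratedDeriv (n + 1) u).fun_pow 2).fun_add
    (((contDiff_gaussian.hasDerivAt_iteratedDeriv n u).fun_pow 2).const_mul ((n : ℝ) + 1))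
  refine h.congr_deriv ?_
  rw [iteratedDeriv_gaussian_add_two]
  push_cast; ring

lemma gaussianEnergy_le_gaussianEnergy_zero (n : ℕ) (u : ℝ) :
    gaussianEnergy n u ≤ gaussianEnergy n 0 := by
  refine apply_le_apply_zero_of_mul_deriv_nonpos (hasDerivAt_gaussianEnergy n) (fun t => ?_) u
  nlinarith [mul_nonneg (sq_nonneg t) (sq_nonneg (iteratedDeriv (n + 1) gaussian t))]

lemma gaussianEnergy_zero_le_factorial (n : ℕ) : gaussianEnergy n 0 ≤ (n + 1)! := by
  induction n with
  | zero =>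
    simp [gaussianEnergy, (hasDerivAt_gaussian 0).deriv, gaussian]
  | succ n ih =>
    have hrec : gaussianEnergy (n + 1) 0 ≤ (n + 2) * gaussianEnergy n 0 := by
      simp only [gaussianEnergy, iteratedDeriv_gaussian_add_two n 0]
      push_cast
      nlinarith [sq_nonneg (iteratedDeriv n gaussian 0)]
    calc gaussianEnergy (n + 1) 0 ≤ (n + 2) * gaussianEnergy n 0 := hrec
      _ ≤ (n + 2) * (n + 1)! := by gcongr
      _ = (n + 1 + 1)! := by push_cast [Nat.factorial_succ (n + 1)]; ring

lemma sq_iteratedDeriv_gaussian_le_factorial (n : ℕ) (u : ℝ) :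
    iteratedDeriv n gaussian u ^ 2 ≤ n ! := by
  have h := (gaussianEnergy_le_gaussianEnergy_zero n u).trans (gaussianEnergy_zero_le_factorial n)
  rw [gaussianEnergy, Nat.factorial_succ] at h
  push_cast at h
  nlinarith [sq_nonneg (iteratedDeriv (n + 1) gaussian u)]

lemma abs_iteratedDeriv_gaussian_le {n : ℕ} {σ : ℝ} (hσ : 0 ≤ σ) (hn : (n : ℝ) ≤ σ ^ 2) (u : ℝ) :
    |iteratedDeriv n gaussian u| ≤ σ ^ n := by
  refine abs_le_of_sq_le_sq ?_ (by positivity)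
  calc iteratedDeriv n gaussian u ^ 2 ≤ n ! := sq_iteratedDeriv_gaussian_le_factorial n u
    _ ≤ (n : ℝ) ^ n := by exact_mod_cast Nat.factorial_le_pow n
    _ ≤ (σ ^ 2) ^ n := by gcongr
    _ = (σ ^ n) ^ 2 := by ring

lemma iteratedDeriv_gaussian_comp (n : ℕ) (a c t : ℝ) :
    iteratedDeriv n (fun s => gaussian (a * (s - c))) t =
      a ^ n * iteratedDeriv n gaussian (a * (t - c)) := by
  rw [iteratedDeriv_comp_sub_const n (fun s => gaussian (a * s)) c,
    iteratedDeriv_comp_const_mul (contDiff_gaussian.of_le (by exact_mod_cast le_top)) a]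

lemma abs_iteratedDeriv_gaussian_comp_le_one {n : ℕ} {σ : ℝ} (hσ : 0 < σ) (hn : (n : ℝ) ≤ σ ^ 2)
    (c t : ℝ) : |iteratedDeriv n (fun s => gaussian (σ⁻¹ * (s - c))) t| ≤ 1 := by
  rw [iteratedDeriv_gaussian_comp, abs_mul, abs_pow, abs_inv, abs_of_pos hσ, inv_pow]
  exact inv_mul_le_one_of_le₀ (abs_iteratedDeriv_gaussian_le hσ.le hn _) (by positivity)

section SumProd

variable {ι : Type*} [Fintype ι] {d : ℕ}

noncomputable def sumProd (α : ι → ℝ) (w : ι → Fin d → ℝ → ℝ) : (Fin d → ℝ) → ℝ :=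
  fun x => ∑ j, α j * ∏ i, w j i (x i)

lemma differentiable_sumProd (α : ι → ℝ) {w : ι → Fin d → ℝ → ℝ}
    (hw : ∀ j i, Differentiable ℝ (w j i)) : Differentiable ℝ (sumProd α w) := by
  unfold sumProd
  fun_prop

lemma pderiv'_sumProd (α : ι → ℝ) {w : ι → Fin d → ℝ → ℝ}
    (hw : ∀ j i, Differentiable ℝ (w j i)) (a : Fin d) :
    pderiv' a (sumProd α w) = sumProd α (fun j => Function.update (w j) a (deriv (w j a))) := by
  ext x
  rw [pderiv'_eq_deriv_update (differentiable_sumProd α hw x)]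
  have hline : (fun t => sumProd α w (Function.update x a t)) =
      fun t => ∑ j, α j * (w j a t * ∏ i ∈ Finset.univ \ {a}, w j i (x i)) := by
    ext t
    simp only [sumProd]
    refine Finset.sum_congr rfl fun j _ => ?_
    rw [← prod_update_apply_update, Function.update_eq_self]
  have hderiv := HasDerivAt.fun_sum (u := Finset.univ) fun j _ =>
    (((hw j a).differentiableAt (x := x a)).hasDerivAt.mul_const
      (∏ i ∈ Finset.univ \ {a}, w j i (x i))).const_mul (α j)
  rw [hline, hderiv.deriv]
  conv_rhs => rw [sumProd, ← Function.update_eq_self a x]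
  simp only [prod_update_apply_update]

lemma iterate_pderiv'_sumProd (α : ι → ℝ) {w : ι → Fin d → ℝ → ℝ}
    (hw : ∀ j i, ContDiff ℝ ∞ (w j i)) (a : Fin d) (m : ℕ) :
    (pderiv' a)^[m] (sumProd α w) =
      sumProd α (fun j => Function.update (w j) a (deriv^[m] (w j a))) := by
  induction m with
  | zero => simp
  | succ m ih =>
    have hw' : ∀ j i, Differentiable ℝ (Function.update (w j) a (deriv^[m] (w j a)) i) := by
      intro j i
      rcases eq_or_ne i a with rfl | hia
      · simpa using ((hw j i).iterate_deriv m).differentiable (by simp)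
      · simpa [hia] using (hw j i).differentiable (by simp)
    rw [Function.iterate_succ_apply', ih, pderiv'_sumProd α hw' a]
    simp only [Function.update_self, Function.update_idem, Function.iterate_succ_apply']

/-- Stated for an arbitrary list so that it goes by induction; `L.count i` is how often the
direction `i` is differentiated. -/
lemma foldr_iterate_pderiv'_sumProd (α : ι → ℝ) {w : ι → Fin d → ℝ → ℝ}
    (hw : ∀ j i, ContDiff ℝ ∞ (w j i)) (k : Fin d → ℕ) (L : List (Fin d)) :
    L.foldr (fun i g => (pderiv' i)^[k i] g) (sumProd α w) =
      sumProd α (fun j i => deriv^[L.count i * k i] (w j i)) := by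
  induction L with
  | nil => simp
  | cons a L ih =>
    rw [List.foldr_cons, ih, iterate_pderiv'_sumProd α (fun j i => (hw j i).iterate_deriv _)]
    congr! with j i
    rcases eq_or_ne i a with rfl | hia
    · rw [Function.update_self, List.count_cons_self, add_mul, one_mul, add_comm,
        Function.iterate_add_apply]
    · rw [Function.update_of_ne hia, List.count_cons_of_ne (Ne.symm hia)]

lemma mixedPartial_sumProd (α : ι → ℝ) {w : ι → Fin d → ℝ → ℝ}
    (hw : ∀ j i, ContDiff ℝ ∞ (w j i)) (k : Fin d → ℕ) :
    mixedPartial k (sumProd α w) = sumProd α (fun j i => iteratedDeriv (k i) (w j i)) := by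
  rw [mixedPartial, foldr_iterate_pderiv'_sumProd α hw]
  simp only [List.count_eq_one_of_mem (List.nodup_finRange d) (List.mem_finRange _), one_mul,
    iteratedDeriv_eq_iterate]

lemma abs_sumProd_le_one {α : ι → ℝ} {w : ι → Fin d → ℝ → ℝ} {x : Fin d → ℝ}
    (hα : ∑ j, |α j| ≤ 1) (hw : ∀ j i, |w j i (x i)| ≤ 1) : |sumProd α w x| ≤ 1 := by
  calc |sumProd α w x| ≤ ∑ j, |α j * ∏ i, w j i (x i)| := Finset.abs_sum_le_sum_abs _ _
    _ ≤ ∑ j, |α j| := by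
      refine Finset.sum_le_sum fun j _ => ?_
      rw [abs_mul, Finset.abs_prod]
      exact mul_le_of_le_one_right (abs_nonneg _)
        (Finset.prod_le_one (fun i _ => abs_nonneg _) fun i _ => hw j i)
    _ ≤ 1 := hα

end SumProd

lemma exp_neg_sum_sq_div_eq_prod_gaussian {d : ℕ} (σ : ℝ) (x c : Fin d → ℝ) :
    Real.exp (-(∑ i, (x i - c i) ^ 2) / (2 * σ ^ 2)) = ∏ i, gaussian (σ⁻¹ * (x i - c i)) := by
  simp only [gaussian, ← Real.exp_sum]
  congr 1
  rw [neg_div, Finset.sum_div, ← Finset.sum_neg_distrib]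
  refine Finset.sum_congr rfl fun i _ => ?_
  ring

theorem gaussian_combination_smoothness_general
    (d J : ℕ) (σ : ℝ) (hσ : 0 < σ)
    (xs : Fin J → (Fin d → ℝ)) (α : Fin J → ℝ) (hα : (∑ j, |α j|) ≤ 1)
    (f : (Fin d → ℝ) → ℝ)
    (hf : f = fun x => ∑ j, α j *
      Real.exp (-(∑ i, (x i - xs j i) ^ 2) / (2 * σ ^ 2)))
    (K : ℕ) (hK : (K : ℝ) ≤ σ ^ 2) :
    ∀ k : Fin d → ℕ, (∑ i, k i) ≤ K →
      ∀ x : Fin d → ℝ, (∀ i, x i ∈ Set.Icc (-1 : ℝ) 1) →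
        |mixedPartial k f x| ≤ 1 := by
  intro k hk x _
  have hf_sumProd : f = sumProd α (fun j i t => gaussian (σ⁻¹ * (t - xs j i))) := by
    ext y
    simp only [hf, sumProd, exp_neg_sum_sq_div_eq_prod_gaussian]
  have hsmooth : ∀ j i, ContDiff ℝ ∞ (fun t => gaussian (σ⁻¹ * (t - xs j i))) := fun j i =>
    contDiff_gaussian.comp (contDiff_const.mul (contDiff_id.sub contDiff_const))
  rw [hf_sumProd, mixedPartial_sumProd α hsmooth]
  refine abs_sumProd_le_one hα fun j i => abs_iteratedDeriv_gaussian_comp_le_one hσ ?_ _ _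
  have hki : k i ≤ K := (Finset.single_le_sum (by simp) (Finset.mem_univ i)).trans hk
  exact (Nat.cast_le.2 hki).trans hK

/-- a linear combination `f` of Gaussian kernels with `ℓ¹`-bounded
coefficients satisfies `‖f‖_K ≤ 1` whenever `K ≤ σ²`. -/
theorem gaussian_combination_smoothness
    (d J : ℕ) (hd : 1 ≤ d) (hJ : 1 ≤ J) (σ : ℝ) (hσ : 0 < σ)
    (xs : Fin J → (Fin d → ℝ)) (α : Fin J → ℝ) (hα : (∑ j, |α j|) ≤ 1)
    (f : (Fin d → ℝ) → ℝ)
    (hf : f = fun x => ∑ j, α j *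
      Real.exp (-(∑ i, (x i - xs j i) ^ 2) / (2 * σ ^ 2)))
    (K : ℕ) (hK : (K : ℝ) ≤ σ ^ 2) :
    ∀ k : Fin d → ℕ, (∑ i, k i) ≤ K →
      ∀ x : Fin d → ℝ, (∀ i, x i ∈ Set.Icc (-1 : ℝ) 1) →
        |mixedPartial k f x| ≤ 1 :=
  gaussian_combination_smoothness_general d J σ hσ xs α hα f hf K hK
end

section
/- Let n ≥ 1, d ≥ 1, and let D = (z_1, …, z_n) and D′ = (z′_1, …, z′_n) be two sequences of vectors in [−1,1]^d that differ in exactly one index (i.e., there is i_0 with z_i = z′_i for all i ≠ i_0). For a sequence D define the d×d matrix A(D) = (1/n) Σ_{i=1}^n z_i z_iᵀ − z̄ z̄ᵀ, where z̄ = (1/n) Σ_{i=1}^n z_i is the mean. Then the spectral norm (largest singular value) of the difference satisfies ‖A(D) − A(D′)‖ ≤ 5d/n. -/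
open scoped BigOperators

/-- Spectral norm (largest singular value) of a real matrix, as the operator norm of
the induced linear map between Euclidean spaces. -/
noncomputable def specNorm {n d : ℕ} (A : Matrix (Fin n) (Fin d) ℝ) : ℝ :=
  ‖LinearMap.toContinuousLinearMap (Matrix.toEuclideanLin A)‖

/-- Empirical covariance matrix `A(D) = (1/n) Σᵢ zᵢ zᵢᵀ − z̄ z̄ᵀ` of a database
`D = (z₁, …, z_n)` of vectors in `ℝ^d`, where `z̄` is the sample mean. -/
noncomputable def covMatrix {n d : ℕ} (z : Fin n → (Fin d → ℝ)) :
    Matrix (Fin d) (Fin d) ℝ :=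
  (1 / n : ℝ) • (∑ i, Matrix.vecMulVec (z i) (z i)) -
    Matrix.vecMulVec (fun j => (1 / n : ℝ) * ∑ i, z i j)
      (fun j => (1 / n : ℝ) * ∑ i, z i j)

/-!
The quadratic form of `A(D)` at `v` is the empirical variance of the scalars `⟪zᵢ, v⟫`, which by
Cauchy–Schwarz lie in `[-R, R]` with `R = √d ‖v‖`. Replacing one scalar `x` by `y` changes the
variance by `((x² - y²) - (x - y)(μ + μ')) / n`, where `μ, μ'` are the two means, so by at most
`(R² + 2R · 2R) / n = 5 d ‖v‖² / n`. As `A(D) - A(D')` is symmetric, its spectral norm is the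
supremum of its Rayleigh quotient, hence at most `5 d / n`.
-/

open Matrix

theorem ContinuousLinearMap.norm_le_of_abs_re_inner_le {𝕜 E : Type*} [RCLike 𝕜]
    [NormedAddCommGroup E] [InnerProductSpace 𝕜 E] (T : E →L[𝕜] E) (hT : T.IsSymmetric)
    {c : ℝ} (hc : 0 ≤ c) (h : ∀ x, |RCLike.re (inner 𝕜 (T x) x)| ≤ c * ‖x‖ ^ 2) :
    ‖T‖ ≤ c := by
  rw [T.norm_eq_iSup_rayleighQuotient hT]
  refine ciSup_le fun x => ?_
  rcases eq_or_ne x 0 with rfl | hx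
  · simpa using hc
  rw [rayleighQuotient, reApplyInnerSelf_apply, abs_div, abs_sq,
    div_le_iff₀ (by positivity)]
  exact h x

theorem specNorm_le_of_isSymm {d : ℕ} {A : Matrix (Fin d) (Fin d) ℝ} (hA : A.IsSymm) {c : ℝ}
    (hc : 0 ≤ c) (h : ∀ v, |v ⬝ᵥ (A *ᵥ v)| ≤ c * (v ⬝ᵥ v)) : specNorm A ≤ c := by
  refine ContinuousLinearMap.norm_le_of_abs_re_inner_le _ ?_ hc fun x => ?_
  · exact isSymmetric_toEuclideanLin_iff.mpr (isHermitian_iff_isSymm.mpr hA)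
  · rw [← real_inner_self_eq_norm_sq]
    simpa only [EuclideanSpace.inner_eq_star_dotProduct, star_trivial, dotProduct_comm,
      RCLike.re_to_real, LinearMap.coe_toContinuousLinearMap', ofLp_toLpLin, toLin'_apply]
      using h x.ofLp

theorem abs_dotProduct_le_of_abs_le {ι : Type*} [Fintype ι] {a : ι → ℝ} {c : ℝ}
    (ha : ∀ j, |a j| ≤ c) (v : ι → ℝ) :
    |a ⬝ᵥ v| ≤ √(Fintype.card ι * c ^ 2 * (v ⬝ᵥ v)) := by
  refine Real.abs_le_sqrt ?_
  have hsq : ∑ j, a j ^ 2 ≤ Fintype.card ι * c ^ 2 := by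
    simpa using Finset.sum_le_sum fun j (_ : j ∈ Finset.univ) =>
      sq_le_sq' (abs_le.mp (ha j)).1 (abs_le.mp (ha j)).2
  calc (a ⬝ᵥ v) ^ 2 ≤ (∑ j, a j ^ 2) * ∑ j, v j ^ 2 :=
        Finset.sum_mul_sq_le_sq_mul_sq _ _ _
    _ ≤ Fintype.card ι * c ^ 2 * (v ⬝ᵥ v) := by
        simp only [dotProduct, ← sq]
        gcongr

theorem sum_sub_sum_eq_of_eq_of_ne {ι M : Type*} [Fintype ι] [AddCommGroup M] {f g : ι → M}
    (i₀ : ι) (h : ∀ i ≠ i₀, f i = g i) : ∑ i, f i - ∑ i, g i = f i₀ - g i₀ := by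
  rw [← Finset.sum_sub_distrib, Fintype.sum_eq_single i₀ fun i hi => by rw [h i hi, sub_self]]

noncomputable def empiricalMean {n : ℕ} (a : Fin n → ℝ) : ℝ := (1 / n : ℝ) * ∑ i, a i

noncomputable def empiricalVariance {n : ℕ} (a : Fin n → ℝ) : ℝ :=
  empiricalMean (fun i => a i ^ 2) - empiricalMean a ^ 2

section EmpiricalVariance

variable {n : ℕ} {a a' : Fin n → ℝ} {R : ℝ}

theorem abs_empiricalMean_le (hn : 0 < n) (ha : ∀ i, |a i| ≤ R) : |empiricalMean a| ≤ R := by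
  have hsum : |∑ i, a i| ≤ n * R := by
    simpa using (Finset.abs_sum_le_sum_abs a Finset.univ).trans
      (Finset.sum_le_sum fun i _ => ha i)
  rw [empiricalMean, abs_mul, abs_of_pos (by positivity), one_div_mul_eq_div,
    div_le_iff₀ (by positivity), mul_comm]
  exact hsum

theorem empiricalMean_sub_of_eq_of_ne (i₀ : Fin n) (h : ∀ i ≠ i₀, a i = a' i) :
    empiricalMean a - empiricalMean a' = (a i₀ - a' i₀) / n := by
  rw [empiricalMean, empiricalMean, ← mul_sub, sum_sub_sum_eq_of_eq_of_ne i₀ h]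
  ring

theorem abs_empiricalVariance_sub_le (i₀ : Fin n) (ha : ∀ i, |a i| ≤ R)
    (ha' : ∀ i, |a' i| ≤ R) (h : ∀ i ≠ i₀, a i = a' i) :
    |empiricalVariance a - empiricalVariance a'| ≤ 5 * R ^ 2 / n := by
  have hn : (0 : ℝ) < n := by exact_mod_cast i₀.pos
  set x := a i₀
  set y := a' i₀
  have hsq := empiricalMean_sub_of_eq_of_ne (a := fun i => a i ^ 2) (a' := fun i => a' i ^ 2)
    i₀ fun i hi => by rw [h i hi]
  have hmean := empiricalMean_sub_of_eq_of_ne i₀ h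
  have hdiff : empiricalVariance a - empiricalVariance a' =
      ((x ^ 2 - y ^ 2) - (x - y) * (empiricalMean a + empiricalMean a')) / n := by
    rw [empiricalVariance, empiricalVariance]
    linear_combination hsq - (empiricalMean a + empiricalMean a') * hmean
  have hx2 : x ^ 2 ≤ R ^ 2 := sq_le_sq' (abs_le.mp (ha i₀)).1 (abs_le.mp (ha i₀)).2
  have hy2 : y ^ 2 ≤ R ^ 2 := sq_le_sq' (abs_le.mp (ha' i₀)).1 (abs_le.mp (ha' i₀)).2
  have hxy : |x - y| ≤ 2 * R := (abs_sub _ _).trans (by linarith [ha i₀, ha' i₀])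
  have hμ : |empiricalMean a + empiricalMean a'| ≤ 2 * R := by
    have := abs_empiricalMean_le i₀.pos ha
    have := abs_empiricalMean_le i₀.pos ha'
    exact (abs_add_le _ _).trans (by linarith)
  rw [hdiff, abs_div, abs_of_pos hn, div_le_div_iff_of_pos_right hn]
  calc |(x ^ 2 - y ^ 2) - (x - y) * (empiricalMean a + empiricalMean a')|
      ≤ |x ^ 2 - y ^ 2| + |x - y| * |empiricalMean a + empiricalMean a'| := by
        rw [← abs_mul]; exact abs_sub _ _
    _ ≤ R ^ 2 + (2 * R) * (2 * R) := by
        gcongr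
        · exact abs_sub_le_of_nonneg_of_le (sq_nonneg _) hx2 (sq_nonneg _) hy2
        · exact (abs_nonneg _).trans hxy
    _ = 5 * R ^ 2 := by ring

end EmpiricalVariance

theorem covMatrix_isSymm {n d : ℕ} (z : Fin n → Fin d → ℝ) : (covMatrix z).IsSymm := by
  have hrank : ∀ v : Fin d → ℝ, (vecMulVec v v).IsSymm := fun v => transpose_vecMulVec v v
  refine (IsSymm.smul ?_ _).sub (hrank _)
  simp only [IsSymm, transpose_sum, (hrank _).eq]

theorem dotProduct_covMatrix_mulVec {n d : ℕ} (z : Fin n → Fin d → ℝ) (v : Fin d → ℝ) :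
    v ⬝ᵥ (covMatrix z *ᵥ v) = empiricalVariance fun i => z i ⬝ᵥ v := by
  have hmean : (fun j => 1 / n * ∑ i, z i j) ⬝ᵥ v = empiricalMean fun i => z i ⬝ᵥ v := by
    simp only [empiricalMean, dotProduct, Finset.mul_sum, Finset.sum_mul, mul_assoc]
    exact Finset.sum_comm
  simp only [covMatrix, empiricalVariance, sub_mulVec, smul_mulVec, sum_mulVec, vecMulVec_mulVec,
    op_smul_eq_mul, dotProduct_sub, dotProduct_smul, dotProduct_sum, smul_eq_mul]
  rw [dotProduct_comm v, hmean]
  simp only [dotProduct_comm v, sq, empiricalMean]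

theorem covariance_sensitivity_general
    (n d : ℕ)
    (z z' : Fin n → (Fin d → ℝ))
    (hz : ∀ i j, z i j ∈ Set.Icc (-1 : ℝ) 1)
    (hz' : ∀ i j, z' i j ∈ Set.Icc (-1 : ℝ) 1)
    (i₀ : Fin n) (hneighbor : ∀ i, i ≠ i₀ → z i = z' i) :
    specNorm (covMatrix z - covMatrix z') ≤ 5 * d / n := by
  refine specNorm_le_of_isSymm ((covMatrix_isSymm z).sub (covMatrix_isSymm z')) (by positivity)
    fun v => ?_
  have hproj : ∀ w : Fin n → Fin d → ℝ, (∀ i j, w i j ∈ Set.Icc (-1 : ℝ) 1) →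
      ∀ i, |w i ⬝ᵥ v| ≤ √(d * (v ⬝ᵥ v)) := fun w hw i => by
    simpa using abs_dotProduct_le_of_abs_le (fun j => abs_le.mpr (hw i j)) v
  have hv : 0 ≤ v ⬝ᵥ v := Fintype.sum_nonneg fun j => mul_self_nonneg (v j)
  rw [sub_mulVec, dotProduct_sub, dotProduct_covMatrix_mulVec, dotProduct_covMatrix_mulVec]
  calc _ ≤ 5 * √(d * (v ⬝ᵥ v)) ^ 2 / n :=
        abs_empiricalVariance_sub_le i₀ (hproj z hz) (hproj z' hz') fun i hi => by
          rw [hneighbor i hi]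
    _ = 5 * d / n * (v ⬝ᵥ v) := by
        rw [Real.sq_sqrt (by positivity)]
        ring

/-- the empirical covariance matrix has spectral-norm sensitivity at most
`5d/n` with respect to changing a single data point in `[−1,1]^d`. -/
theorem covariance_sensitivity
    (n d : ℕ) (hn : 1 ≤ n) (hd : 1 ≤ d)
    (z z' : Fin n → (Fin d → ℝ))
    (hz : ∀ i j, z i j ∈ Set.Icc (-1 : ℝ) 1)
    (hz' : ∀ i j, z' i j ∈ Set.Icc (-1 : ℝ) 1)
    (i₀ : Fin n) (hneighbor : ∀ i, i ≠ i₀ → z i = z' i) :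
    specNorm (covMatrix z - covMatrix z') ≤ 5 * d / n :=
  covariance_sensitivity_general n d z z' hz hz' i₀ hneighbor
end

section
/- Let A be a real symmetric d×d matrix with spectral norm λ_1 = ‖A‖, let u be a unit eigenvector of A with eigenvalue λ > 0, let x be a unit vector, and write sin²θ = 1 − ⟨u, x⟩². Define λ̂ = ‖Ax‖ = √(xᵀA²x). Then λ̂ − λ ≤ (λ_1² − λ²) · sin²θ / (λ̂ + λ). -/
/-!
Write `x = ⟪u, x⟫ u + w` with `w ⟂ u`. Since `A` is symmetric, `A w ⟂ u`, so
`‖A x‖² = λ² ⟪u, x⟫² + ‖A w‖² ≤ λ² ⟪u, x⟫² + λ₁² sin²θ`, i.e. `λ̂² − λ² ≤ (λ₁² − λ²) sin²θ`;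
divide by `λ̂ + λ > 0`.
-/

open scoped RealInnerProductSpace

section EigenvectorSplitting

variable {E : Type*} [NormedAddCommGroup E] [InnerProductSpace ℝ E] {u : E}

theorem inner_sub_inner_smul_self (hu : ‖u‖ = 1) (x : E) : ⟪u, x - ⟪u, x⟫ • u⟫ = 0 := by
  rw [inner_sub_right, real_inner_smul_right, real_inner_self_eq_norm_sq, hu]
  ring

theorem norm_sub_inner_smul_sq (hu : ‖u‖ = 1) (x : E) :
    ‖x - ⟪u, x⟫ • u‖ ^ 2 = ‖x‖ ^ 2 - ⟪u, x⟫ ^ 2 := by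
  rw [norm_sub_sq_real, real_inner_smul_right, real_inner_comm, norm_smul, hu,
    Real.norm_eq_abs, mul_one, sq_abs]
  ring

theorem LinearMap.IsSymmetric.norm_apply_sq_eq_of_eigenvector {T : E →ₗ[ℝ] E}
    (hT : T.IsSymmetric) {lam : ℝ} (heig : T u = lam • u) (hu : ‖u‖ = 1) (x : E) :
    ‖T x‖ ^ 2 = (lam * ⟪u, x⟫) ^ 2 + ‖T (x - ⟪u, x⟫ • u)‖ ^ 2 := by
  set w := x - ⟪u, x⟫ • u
  have hx : T x = (⟪u, x⟫ * lam) • u + T w := by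
    rw [map_sub, map_smul, heig, smul_smul, add_sub_cancel]
  have horth : ⟪(⟪u, x⟫ * lam) • u, T w⟫ = 0 := by
    rw [real_inner_smul_left, ← hT, heig, real_inner_smul_left,
      inner_sub_inner_smul_self hu, mul_zero, mul_zero]
  rw [hx, norm_add_sq_real, horth, norm_smul, hu, Real.norm_eq_abs, mul_one, sq_abs,
    mul_comm]
  ring

theorem norm_apply_sq_le_of_eigenvector {T : E →L[ℝ] E} (hT : (T : E →ₗ[ℝ] E).IsSymmetric)
    {lam : ℝ} (heig : T u = lam • u) (hu : ‖u‖ = 1) (x : E) :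
    ‖T x‖ ^ 2 ≤ (lam * ⟪u, x⟫) ^ 2 + ‖T‖ ^ 2 * (‖x‖ ^ 2 - ⟪u, x⟫ ^ 2) := by
  have hsplit := hT.norm_apply_sq_eq_of_eigenvector heig hu x
  have hbound : ‖T (x - ⟪u, x⟫ • u)‖ ^ 2 ≤ (‖T‖ * ‖x - ⟪u, x⟫ • u‖) ^ 2 :=
    pow_le_pow_left₀ (norm_nonneg _) (T.le_opNorm _) 2
  rw [mul_pow, norm_sub_inner_smul_sq hu] at hbound
  simp only [ContinuousLinearMap.coe_coe] at hsplit
  linarith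

end EigenvectorSplitting

theorem sub_le_div_add_of_sq_sub_sq_le {a b K : ℝ} (hab : 0 < a + b) (h : a ^ 2 - b ^ 2 ≤ K) :
    a - b ≤ K / (a + b) := by
  rw [le_div_iff₀ hab]
  nlinarith

/-- eigenvalue estimation error. If `A` is real symmetric with spectral
norm `lam₁`, `u` a unit eigenvector with eigenvalue `lam > 0`, `x` a unit vector,
`sin²θ = 1 − ⟨u,x⟩²`, and `lam̂ = ‖Ax‖`, then
`lam̂ − lam ≤ (lam₁² − lam²) sin²θ / (lam̂ + lam)`. -/
theorem eigenvalue_estimate_bound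
    (d : ℕ) (A : Matrix (Fin d) (Fin d) ℝ) (hA : A.IsSymm)
    (u x : EuclideanSpace ℝ (Fin d)) (lam : ℝ) (hlam : 0 < lam)
    (heig : Matrix.toEuclideanCLM (𝕜 := ℝ) A u = lam • u)
    (hu : ‖u‖ = 1) (hx : ‖x‖ = 1)
    (lam₁ : ℝ) (hlam₁ : lam₁ = ‖Matrix.toEuclideanCLM (𝕜 := ℝ) A‖)
    (lamHat : ℝ) (hlamHat : lamHat = ‖Matrix.toEuclideanCLM (𝕜 := ℝ) A x‖) :
    lamHat - lam ≤ (lam₁ ^ 2 - lam ^ 2) * (1 - ⟪u, x⟫ ^ 2) / (lamHat + lam) := by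
  have hsymm : (Matrix.toEuclideanCLM (𝕜 := ℝ) A :
      EuclideanSpace ℝ (Fin d) →ₗ[ℝ] EuclideanSpace ℝ (Fin d)).IsSymmetric :=
    Matrix.isSymmetric_toEuclideanLin_iff.mpr (Matrix.isHermitian_iff_isSymm.mpr hA)
  have hsq := norm_apply_sq_le_of_eigenvector hsymm heig hu x
  rw [hx, ← hlamHat, ← hlam₁] at hsq
  have hpos : 0 < lamHat + lam := by
    have : 0 ≤ lamHat := hlamHat ▸ norm_nonneg _
    linarith
  exact sub_le_div_add_of_sq_sub_sq_le hpos (by linarith)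
end

section
/- Let m, N ≥ 1, δ > 0, and let W and W′ be real m×N matrices with |W_{rk} − W′_{rk}| ≤ δ for all entries. Let b, Δ ∈ ℝ^m, set b̂ = b + Δ, and let b̂′ ∈ ℝ^m satisfy ‖b̂′ − b̂‖_1 ≤ mδ + ‖Δ‖_1. Suppose u′ ∈ ℝ^N is a probability vector (u′ ⪰ 0, ‖u′‖_1 = 1) with W u′ = b, and let u* be any probability vector minimizing ‖W′u − b̂′‖_1 over all probability vectors u. Then for every vector b̃ ∈ ℝ^m and every c ∈ ℝ^m, |⟨c, b̃ − b⟩| ≤ ( ‖b̃ − W u*‖_1 + 4mδ + 4‖Δ‖_1 ) · ‖c‖_∞. -/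
/-!
Both `W u*` and `b` are close to `b̂′` in `ℓ¹`. For `b = W u′` this is the triangle inequality
through `W′u′` and `b̂`; for `W u*` one passes through `W′u*` and uses the optimality of `u*`
against the feasible competitor `u′`. Replacing `W` by `W′` moves `W u` by at most `mδ` in `ℓ¹`
because `u` is a probability vector. Hölder's inequality between `ℓ∞` and `ℓ¹` then bounds
`⟨c, b̃ − b⟩` by `‖c‖_∞ (‖b̃ − W u*‖₁ + ‖W u* − b‖₁)`.
-/

open Finset Matrix

section L1

variable {ι κ : Type*} [Fintype κ]

lemma abs_mulVec_le_of_mem_stdSimplex {A : Matrix ι κ ℝ} {δ : ℝ} (hA : ∀ i k, |A i k| ≤ δ)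
    {u : κ → ℝ} (hu : u ∈ stdSimplex ℝ κ) (i : ι) : |(A *ᵥ u) i| ≤ δ :=
  calc |(A *ᵥ u) i| = |∑ k, A i k * u k| := rfl
    _ ≤ ∑ k, |A i k * u k| := abs_sum_le_sum_abs _ _
    _ ≤ ∑ k, δ * u k := sum_le_sum fun k _ => by
      rw [abs_mul, abs_of_nonneg (hu.1 k)]
      exact mul_le_mul_of_nonneg_right (hA i k) (hu.1 k)
    _ = δ := by rw [← mul_sum, hu.2, mul_one]

variable [Fintype ι]

def l1Dist (x y : ι → ℝ) : ℝ := ∑ i, |x i - y i|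

lemma l1Dist_comm (x y : ι → ℝ) : l1Dist x y = l1Dist y x := by
  simp only [l1Dist, abs_sub_comm]

lemma l1Dist_triangle (x y z : ι → ℝ) : l1Dist x z ≤ l1Dist x y + l1Dist y z := by
  rw [l1Dist, l1Dist, l1Dist, ← sum_add_distrib]
  exact sum_le_sum fun i _ => abs_sub_le _ _ _

lemma abs_sum_mul_le_iSup_abs_mul_sum_abs (c v : ι → ℝ) :
    |∑ i, c i * v i| ≤ (⨆ i, |c i|) * ∑ i, |v i| := by
  rw [mul_sum]
  refine (abs_sum_le_sum_abs _ _).trans (sum_le_sum fun i _ => ?_)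
  rw [abs_mul]
  exact mul_le_mul_of_nonneg_right
    (le_ciSup (f := fun i => |c i|) (Set.finite_range _).bddAbove i) (abs_nonneg _)

lemma l1Dist_mulVec_le_of_mem_stdSimplex {A B : Matrix ι κ ℝ} {δ : ℝ}
    (hAB : ∀ i k, |A i k - B i k| ≤ δ) {u : κ → ℝ} (hu : u ∈ stdSimplex ℝ κ) :
    l1Dist (A *ᵥ u) (B *ᵥ u) ≤ Fintype.card ι * δ :=
  calc l1Dist (A *ᵥ u) (B *ᵥ u) = ∑ i, |((A - B) *ᵥ u) i| := by
        simp only [l1Dist, sub_mulVec, Pi.sub_apply]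
    _ ≤ ∑ _i : ι, δ := sum_le_sum fun i _ => abs_mulVec_le_of_mem_stdSimplex hAB hu i
    _ = Fintype.card ι * δ := by simp

theorem l1Dist_mulVec_le_of_isMinOn {W W' : Matrix ι κ ℝ} {δ : ℝ}
    (hWW' : ∀ i k, |W i k - W' i k| ≤ δ) {u' ustar : κ → ℝ} {y : ι → ℝ}
    (hu' : u' ∈ stdSimplex ℝ κ) (hustar : ustar ∈ stdSimplex ℝ κ)
    (hmin : IsMinOn (fun u => l1Dist (W' *ᵥ u) y) (stdSimplex ℝ κ) ustar) :
    l1Dist (W *ᵥ ustar) (W *ᵥ u') ≤ 2 * (Fintype.card ι * δ) + 2 * l1Dist (W *ᵥ u') y := by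
  have hopt : l1Dist (W' *ᵥ ustar) y ≤ l1Dist (W' *ᵥ u') y := isMinOn_iff.mp hmin u' hu'
  have hstar := l1Dist_mulVec_le_of_mem_stdSimplex hWW' hustar
  have hfeas := l1Dist_mulVec_le_of_mem_stdSimplex hWW' hu'
  rw [l1Dist_comm] at hfeas
  linarith [l1Dist_triangle (W *ᵥ ustar) (W' *ᵥ ustar) (W *ᵥ u'),
    l1Dist_triangle (W' *ᵥ ustar) y (W *ᵥ u'), l1Dist_triangle (W' *ᵥ u') (W *ᵥ u') y,
    l1Dist_comm y (W *ᵥ u')]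

end L1

theorem lp_stability_bound_general
    (m N : ℕ) (δ : ℝ)
    (W W' : Matrix (Fin m) (Fin N) ℝ) (hWW' : ∀ r k, |W r k - W' r k| ≤ δ)
    (b Δ bhat : Fin m → ℝ) (hbhat : bhat = b + Δ)
    (bhat' : Fin m → ℝ)
    (hbhat' : (∑ r, |bhat' r - bhat r|) ≤ m * δ + ∑ r, |Δ r|)
    (u' : Fin N → ℝ) (hu'nonneg : ∀ k, 0 ≤ u' k) (hu'sum : (∑ k, u' k) = 1)
    (hWu' : W.mulVec u' = b)
    (ustar : Fin N → ℝ) (hustarnonneg : ∀ k, 0 ≤ ustar k)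
    (hustarsum : (∑ k, ustar k) = 1)
    (hmin : ∀ u : Fin N → ℝ, (∀ k, 0 ≤ u k) → (∑ k, u k) = 1 →
      (∑ r, |W'.mulVec ustar r - bhat' r|) ≤ ∑ r, |W'.mulVec u r - bhat' r|)
    (btilde c : Fin m → ℝ) :
    |∑ r, c r * (btilde r - b r)| ≤
      ((∑ r, |btilde r - W.mulVec ustar r|) + 4 * m * δ + 4 * ∑ r, |Δ r|) *
        (⨆ r : Fin m, |c r|) := by
  have hnoise : l1Dist b bhat = ∑ r, |Δ r| := by
    simp [l1Dist, hbhat]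
  have hfit : l1Dist (W *ᵥ ustar) b ≤ 2 * (m * δ) + 2 * l1Dist b bhat' := by
    simpa [hWu'] using l1Dist_mulVec_le_of_isMinOn hWW' (y := bhat') ⟨hu'nonneg, hu'sum⟩
      ⟨hustarnonneg, hustarsum⟩ (isMinOn_iff.mpr fun u hu => hmin u hu.1 hu.2)
  have hdata : l1Dist b bhat' ≤ m * δ + 2 * ∑ r, |Δ r| := by
    have hbhat_bhat' : l1Dist bhat bhat' ≤ m * δ + ∑ r, |Δ r| := by rwa [l1Dist_comm]
    linarith [l1Dist_triangle b bhat bhat']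
  calc |∑ r, c r * (btilde r - b r)| ≤ (⨆ r, |c r|) * l1Dist btilde b :=
        abs_sum_mul_le_iSup_abs_mul_sum_abs c _
    _ ≤ (⨆ r, |c r|) * (l1Dist btilde (W *ᵥ ustar) + 4 * m * δ + 4 * ∑ r, |Δ r|) := by
        gcongr
        · exact Real.iSup_nonneg fun r => abs_nonneg (c r)
        · linarith [l1Dist_triangle btilde (W *ᵥ ustar) b]
    _ = _ := mul_comm _ _

/-- stability estimate for the linear program
`min_u ‖W′u − b̂′‖₁` over the probability simplex. For any vectors `b̃` and `c`,
`|⟨c, b̃ − b⟩| ≤ (‖b̃ − W u*‖₁ + 4mδ + 4‖Δ‖₁) · ‖c‖_∞`. -/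
theorem lp_stability_bound
    (m N : ℕ) (hm : 1 ≤ m) (hN : 1 ≤ N) (δ : ℝ) (hδ : 0 < δ)
    (W W' : Matrix (Fin m) (Fin N) ℝ) (hWW' : ∀ r k, |W r k - W' r k| ≤ δ)
    (b Δ bhat : Fin m → ℝ) (hbhat : bhat = b + Δ)
    (bhat' : Fin m → ℝ)
    (hbhat' : (∑ r, |bhat' r - bhat r|) ≤ m * δ + ∑ r, |Δ r|)
    (u' : Fin N → ℝ) (hu'nonneg : ∀ k, 0 ≤ u' k) (hu'sum : (∑ k, u' k) = 1)
    (hWu' : W.mulVec u' = b)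
    (ustar : Fin N → ℝ) (hustarnonneg : ∀ k, 0 ≤ ustar k)
    (hustarsum : (∑ k, ustar k) = 1)
    (hmin : ∀ u : Fin N → ℝ, (∀ k, 0 ≤ u k) → (∑ k, u k) = 1 →
      (∑ r, |W'.mulVec ustar r - bhat' r|) ≤ ∑ r, |W'.mulVec u r - bhat' r|)
    (btilde c : Fin m → ℝ) :
    |∑ r, c r * (btilde r - b r)| ≤
      ((∑ r, |btilde r - W.mulVec ustar r|) + 4 * m * δ + 4 * ∑ r, |Δ r|) *
        (⨆ r : Fin m, |c r|) :=
  lp_stability_bound_general m N δ W W' hWW' b Δ bhat hbhat bhat' hbhat' u' hu'nonneg hu'sum hWu'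
    ustar hustarnonneg hustarsum hmin btilde c
end
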